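/- If K and K′ are n-dimensional opetopic directed complexes such that the opetopic sequences G_0^−(⟨K⟩) → … → G_n^−(⟨K⟩) and G_0^−(⟨K′⟩) → … → G_n^−(⟨K′⟩) are isomorphic, then K and K′ are isomorphic as opetopic directed complexes (i.e., there is a dimension-preserving bijection between their distinguished bases, preserving thinness, whose linear extension is a chain isomorphism commuting with the boundaries and augmentations). -/

import Mathlib

open Finsupp

/-- A free augmented directed complex, encoded by its distinguished graded basis:
`B` is the set of basis elements, `dim` the dimension function, `bd a` the boundary
chain of a basis element `a`, and `eps` the augmentation (supported in dimension 0). -/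
structure FADC where
  B : Type
  dim : B → ℕ
  bd : B → (B →₀ ℤ)
  eps : B → ℤ
  bd_dim : ∀ a b, b ∈ (bd a).support → dim b + 1 = dim a
  eps_dim : ∀ b, 0 < dim b → eps b = 0
  bd_bd : ∀ a : B, ((bd a).sum fun b n => n • bd b) = 0
  eps_bd : ∀ a : B, ((bd a).sum fun b n => n * eps b) = 0

namespace FADC

variable (K : FADC)

/-- The boundary homomorphism `∂`, extended to chains. -/
noncomputable def bdc (c : K.B →₀ ℤ) : K.B →₀ ℤ := c.sum fun b n => n • K.bd b

/-- The augmentation `ε`, extended to chains. -/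
noncomputable def epsc (c : K.B →₀ ℤ) : ℤ := c.sum fun b n => n * K.eps b

/-- `∂⁺c`, the positive part of `∂c`. -/
noncomputable def bdp (c : K.B →₀ ℤ) : K.B →₀ ℤ := (K.bdc c).mapRange (fun n => max n 0) (by simp)

/-- `∂⁻c`, the negative part of `∂c`. -/
noncomputable def bdm (c : K.B →₀ ℤ) : K.B →₀ ℤ := (-K.bdc c).mapRange (fun n => max n 0) (by simp)

/-- `K` is unital if `ε((∂⁻)^q a) = ε((∂⁺)^q a) = 1` for every `q`-dimensional
basis element `a`. -/
def Unital : Prop := ∀ a : K.B,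
  K.epsc (K.bdm^[K.dim a] (Finsupp.single a 1)) = 1 ∧
  K.epsc (K.bdp^[K.dim a] (Finsupp.single a 1)) = 1

/-- `K` is loop-free if its basis elements admit a (strict) partial order such that
for every basis element `a` and every `r > 0`, the basis elements occurring in
`(∂⁻)^r a` strictly precede those occurring in `(∂⁺)^r a`. -/
def LoopFree : Prop :=
  ∃ lt : K.B → K.B → Prop, IsStrictOrder K.B lt ∧
    ∀ (a : K.B) (r : ℕ), 0 < r →
      ∀ b ∈ (K.bdm^[r] (Finsupp.single a 1)).support,
        ∀ b' ∈ (K.bdp^[r] (Finsupp.single a 1)).support, lt b b'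

/-- `K` is atomic of dimension `n`. -/
def Atomic (n : ℕ) : Prop :=
  (∀ b : K.B, K.dim b ≤ n) ∧
  (∃! g : K.B, K.dim g = n) ∧
  (∀ b : K.B, K.dim b < n → ∃ a : K.B, K.dim b < K.dim a ∧
    (b ∈ (K.bdm (Finsupp.single a 1)).support ∨ b ∈ (K.bdp (Finsupp.single a 1)).support))

/-- `g_q^α(x)`: given `x_q^- = xq` and `x_{q+1}^α = c`, this is
`x_q^- + ∂⁺a_1 + … + ∂⁺a_k` where `a_1, …, a_k` are the terms of `c`. -/
noncomputable def gch (xq c : K.B →₀ ℤ) : K.B →₀ ℤ :=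
  xq + c.sum fun b n => n • K.bdp (Finsupp.single b 1)

/-- The negative chains `⟨K⟩_q^- = (∂⁻)^{n-q} g` of the canonical atom. -/
noncomputable def atomNeg (g : K.B) (n q : ℕ) : K.B →₀ ℤ :=
  if q ≤ n then K.bdm^[n - q] (Finsupp.single g 1) else 0

/-- The positive chains `⟨K⟩_q^+ = (∂⁺)^{n-q} g` of the canonical atom. -/
noncomputable def atomPos (g : K.B) (n q : ℕ) : K.B →₀ ℤ :=
  if q ≤ n then K.bdp^[n - q] (Finsupp.single g 1) else 0

end FADC

/-- Membership in `νK`: the double sequence `(x_0^-, x_0^+ | x_1^-, x_1^+ | …)`,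
given by `xm` and `xp`, is a member of `νK`. -/
structure NuMem (K : FADC) (xm xp : ℕ → (K.B →₀ ℤ)) : Prop where
  dim_m : ∀ q, ∀ b ∈ (xm q).support, K.dim b = q
  dim_p : ∀ q, ∀ b ∈ (xp q).support, K.dim b = q
  nonneg_m : ∀ q b, 0 ≤ xm q b
  nonneg_p : ∀ q b, 0 ≤ xp q b
  fin : ∃ n, ∀ q, n < q → xm q = 0 ∧ xp q = 0
  eps_m : K.epsc (xm 0) = 1
  eps_p : K.epsc (xp 0) = 1
  bd_m : ∀ q, K.bdc (xm (q + 1)) = xp q - xm q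
  bd_p : ∀ q, K.bdc (xp (q + 1)) = xp q - xm q

/-- `K` together with the class `thin` of thin basis elements is an
`n`-dimensional opetopic directed complex. -/
structure IsODC (K : FADC) (thin : K.B → Prop) (n : ℕ) : Prop where
  atomic : K.Atomic n
  loopFree : K.LoopFree
  unital : K.Unital
  thin_pos : ∀ b, thin b → 0 < K.dim b
  bdp_basis : ∀ b : K.B, 0 < K.dim b →
    ∃ a : K.B, ¬ thin a ∧ K.bdp (Finsupp.single b 1) = Finsupp.single a 1
  bdm_thin : ∀ b : K.B, thin b →
    ∃ a : K.B, ¬ thin a ∧ K.bdm (Finsupp.single b 1) = Finsupp.single a 1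

/-- An opetopic directed complex is reduced if every thin basis element is `∂⁻a`
for some other basis element `a`. -/
def ODCReduced (K : FADC) (thin : K.B → Prop) : Prop :=
  ∀ b, thin b → ∃ a, a ≠ b ∧ K.bdm (Finsupp.single a 1) = Finsupp.single b 1

/-- A network: finite sets of edges and vertices with partially defined source and
target functions; input edges are those with no source, output edges those with no
target. -/
structure Network where
  E : Type
  V : Type
  finE : Finite E
  finV : Finite V
  src : E → Option V
  tgt : E → Option V

namespace Network

variable (N : Network)

/-- One step of a path: the target of `e` is the source of `e'`. -/
def step (e e' : N.E) : Prop := ∃ v : N.V, N.tgt e = some v ∧ N.src e' = some v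

/-- There is a path from `e` to `e'`. -/
def PathTo (e e' : N.E) : Prop := Relation.ReflTransGen N.step e e'

/-- A network is acyclic if there is no nontrivial path from an edge to itself. -/
def Acyclic : Prop := ∀ e : N.E, ¬ Relation.TransGen N.step e e

/-- A network is linear if it is acyclic and consists of a single path
`e_0, v_1, e_1, …, v_k, e_k`. -/
def Linear : Prop := N.Acyclic ∧
  ∃ (k : ℕ) (e : Fin (k + 1) ≃ N.E) (v : Fin k ≃ N.V),
    N.src (e 0) = none ∧ N.tgt (e (Fin.last k)) = none ∧
    ∀ i : Fin k, N.tgt (e i.castSucc) = some (v i) ∧ N.src (e i.succ) = some (v i)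

/-- A network is confluent if it is acyclic, has a unique output edge, and every
vertex is the source of exactly one edge and the target of at least one edge. -/
def Confluent : Prop := N.Acyclic ∧ (∃! e : N.E, N.tgt e = none) ∧
  (∀ v : N.V, ∃! e : N.E, N.src e = some v) ∧ (∀ v : N.V, ∃ e : N.E, N.tgt e = some v)

end Network

/-- An opetopic network: an acyclic network with a unique output edge, together with
thin edges (which are inputs) and thin vertices (each the target of exactly one edge,
which is not thin). -/
structure OpetopicNetwork extends Network where
  thinE : E → Prop
  thinV : V → Prop
  acyclic : toNetwork.Acyclic
  out_unique : ∃! e : E, tgt e = none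
  thinE_input : ∀ e, thinE e → src e = none
  thinV_unique : ∀ v, thinV v → ∃! e, tgt e = some v
  thinV_nonthin : ∀ v e, thinV v → tgt e = some v → ¬ thinE e

/-- An opetopic network is reduced if every thin edge has a target vertex which is
the target of no other edge. -/
def OpetopicNetwork.Reduced (N : OpetopicNetwork) : Prop :=
  ∀ e, N.thinE e → ∃ v, N.tgt e = some v ∧ ∀ e', N.tgt e' = some v → e' = e

/-- `c` is a constellation from `N` to `P`: a bijection from the vertices of `N` to
the input edges of `P`, preserving thinness, such that for every edge `e` of `P`
there is exactly one edge of `N` with a source but not a target in the preimage of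
`I_e` (the input edges of `P` from which there is a path to `e`). -/
def IsConstellation (N P : OpetopicNetwork) (c : N.V → P.E) : Prop :=
  (∀ v, P.src (c v) = none) ∧
  Function.Injective c ∧
  (∀ e : P.E, P.src e = none → ∃ v, c v = e) ∧
  (∀ v, N.thinV v ↔ P.thinE (c v)) ∧
  (∀ e : P.E, ∃! e' : N.E,
    (∃ v, N.src e' = some v ∧ P.toNetwork.PathTo (c v) e) ∧
    ¬ (∃ v, N.tgt e' = some v ∧ P.toNetwork.PathTo (c v) e))

/-- An `n`-dimensional opetopic sequence `N_0 → N_1 → … → N_n`. -/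
structure OpetopicSequence (n : ℕ) where
  N : Fin (n + 1) → OpetopicNetwork
  c : ∀ q : Fin n, (N q.castSucc).V → (N q.succ).E
  constell : ∀ q : Fin n, IsConstellation (N q.castSucc) (N q.succ) (c q)
  linear0 : (N 0).toNetwork.Linear
  noThin0 : ∀ e, ¬ (N 0).thinE e
  top_single : ∃! _e : (N (Fin.last n)).E, True
  top_noV : IsEmpty (N (Fin.last n)).V

/-- An isomorphism of opetopic sequences: families of bijections on edges and
vertices preserving sources, targets, thin edges and thin vertices, and commuting
with the constellations. -/
def SeqIso (n : ℕ) (S S' : OpetopicSequence n) : Prop :=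
  ∃ (fE : ∀ q : Fin (n + 1), (S.N q).E ≃ (S'.N q).E)
    (fV : ∀ q : Fin (n + 1), (S.N q).V ≃ (S'.N q).V),
    (∀ q : Fin (n + 1),
      (∀ e v, (S.N q).src e = some v ↔ (S'.N q).src (fE q e) = some (fV q v)) ∧
      (∀ e v, (S.N q).tgt e = some v ↔ (S'.N q).tgt (fE q e) = some (fV q v)) ∧
      (∀ e, (S.N q).thinE e ↔ (S'.N q).thinE (fE q e)) ∧
      (∀ v, (S.N q).thinV v ↔ (S'.N q).thinV (fV q v))) ∧
    (∀ q : Fin n, ∀ v, fE q.succ (S.c q v) = S'.c q (fV q.castSucc v))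

/-- The opetopic sequence `S` realizes the sequence
`G_0^-(⟨K⟩) → … → G_n^-(⟨K⟩)` associated to the opetopic directed complex `K`
(with top basis element `g` and thin elements `thin`): the edges of `S.N q`
correspond bijectively to the terms of `g_q^-(⟨K⟩)`, the vertices to the terms of
`⟨K⟩_{q+1}^-`, sources, targets and thinness are as prescribed by `∂⁺`, `∂⁻` and
`thin`, and the constellations are the identity correspondences. -/
def RealizedBy (K : FADC) (thin : K.B → Prop) (n : ℕ) (g : K.B)
    (S : OpetopicSequence n) : Prop :=
  ∃ (eE : ∀ q : Fin (n + 1), (S.N q).E → K.B)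
    (eV : ∀ q : Fin (n + 1), (S.N q).V → K.B),
    (∀ q : Fin (n + 1),
      Function.Injective (eE q) ∧
      (∀ ed, eE q ed ∈ (K.gch (K.atomNeg g n q.1) (K.atomNeg g n (q.1 + 1))).support) ∧
      (∀ b ∈ (K.gch (K.atomNeg g n q.1) (K.atomNeg g n (q.1 + 1))).support,
        ∃ ed, eE q ed = b) ∧
      Function.Injective (eV q) ∧
      (∀ v, eV q v ∈ (K.atomNeg g n (q.1 + 1)).support) ∧
      (∀ b ∈ (K.atomNeg g n (q.1 + 1)).support, ∃ v, eV q v = b) ∧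
      (∀ ed v, (S.N q).src ed = some v ↔
        eE q ed ∈ (K.bdp (Finsupp.single (eV q v) 1)).support) ∧
      (∀ ed v, (S.N q).tgt ed = some v ↔
        eE q ed ∈ (K.bdm (Finsupp.single (eV q v) 1)).support) ∧
      (∀ ed, (S.N q).thinE ed ↔ thin (eE q ed)) ∧
      (∀ v, (S.N q).thinV v ↔ thin (eV q v))) ∧
    (∀ q : Fin n, ∀ v, eE q.succ (S.c q v) = eV q.castSucc v)

/-- A bundled `n`-dimensional opetopic directed complex. -/
structure ODCBundle (n : ℕ) where
  K : FADC
  thin : K.B → Prop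
  g : K.B
  dim_g : K.dim g = n
  isODC : IsODC K thin n

/-- Isomorphism of (bundled) opetopic directed complexes: a dimension- and
thinness-preserving bijection of bases commuting with boundaries and augmentations. -/
def ODCIso {n : ℕ} (A A' : ODCBundle n) : Prop :=
  ∃ φ : A.K.B ≃ A'.K.B,
    (∀ b, A'.K.dim (φ b) = A.K.dim b) ∧
    (∀ b, A'.thin (φ b) ↔ A.thin b) ∧
    (∀ b, A'.K.bd (φ b) = Finsupp.equivMapDomain φ (A.K.bd b)) ∧
    (∀ b, A'.K.eps (φ b) = A.K.eps b)


/-!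
Every basis element of dimension `q` is an edge of `G_q^-(⟨K⟩)`: by downward induction on `q`,
since the boundary terms of an edge of `G_{q+1}` are edges of `G_q`, where an edge `∂⁺w` is
handled through `∂∂⁺w = ∂∂⁻w` by recursion along the loop-free order. Hence the edges of the
sequence enumerate the basis, and the isomorphism of sequences becomes a dimension- and
thinness-preserving bijection of bases. Walking back along the acyclic networks shows that the
chains `⟨K⟩_q^-`, and `∂⁻` of their terms, have coefficients at most `1`, so the boundary of a
vertex is determined by its incident edges. Every other basis element of positive dimension is
`∂⁺w` for a vertex `w`, with boundary `∂∂⁻w`, and the loop-free order again drives the induction.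
-/

theorem Finsupp.equivMapDomain_eq_of_mem_support_iff {α β : Type*} (φ : α ≃ β)
    {c : α →₀ ℤ} {c' : β →₀ ℤ} (hc₀ : ∀ x, 0 ≤ c x) (hc₁ : ∀ x, c x ≤ 1)
    (hc'₀ : ∀ y, 0 ≤ c' y) (hc'₁ : ∀ y, c' y ≤ 1)
    (h : ∀ x, φ x ∈ c'.support ↔ x ∈ c.support) : equivMapDomain φ c = c' := by
  ext y
  obtain ⟨x, rfl⟩ := φ.surjective y
  have hx := h x
  rw [mem_support_iff, mem_support_iff] at hx
  rw [equivMapDomain_apply, Equiv.symm_apply_apply]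
  have := hc₀ x; have := hc₁ x; have := hc'₀ (φ x); have := hc'₁ (φ x)
  by_cases hcx : c x = 0
  · have := not_not.1 (mt hx.1 (not_not.2 hcx)); omega
  · have := hx.2 hcx; omega

theorem Network.Acyclic.wellFounded {N : Network} (h : N.Acyclic) : WellFounded N.step := by
  have := N.finE
  have : IsTrans N.E (Relation.TransGen N.step) := ⟨fun _ _ _ => Relation.TransGen.trans⟩
  have : Std.Irrefl (Relation.TransGen N.step) := ⟨h⟩
  exact (Finite.wellFounded_of_trans_of_irrefl _).mono fun _ _ => Relation.TransGen.single

namespace FADC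

section Chains

variable (K : FADC)

theorem bdc_eq_linearCombination (c : K.B →₀ ℤ) : K.bdc c = linearCombination ℤ K.bd c :=
  (linearCombination_apply ℤ c).symm

theorem bdc_single (b : K.B) : K.bdc (single b 1) = K.bd b := by
  rw [bdc_eq_linearCombination, linearCombination_single, one_smul]

theorem bdc_add (c d : K.B →₀ ℤ) : K.bdc (c + d) = K.bdc c + K.bdc d := by
  simp only [bdc_eq_linearCombination, map_add]

theorem bdc_apply (c : K.B →₀ ℤ) (x : K.B) :
    K.bdc c x = ∑ b ∈ c.support, c b * K.bd b x := by
  simp [bdc, Finsupp.sum]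

theorem bdc_bdc (c : K.B →₀ ℤ) : K.bdc (K.bdc c) = 0 := by
  have hcomp : (linearCombination ℤ K.bd).comp (linearCombination ℤ K.bd) = 0 :=
    lhom_ext fun a k => by
      rw [LinearMap.comp_apply, linearCombination_single, map_smul, ← bdc_eq_linearCombination,
        show K.bdc (K.bd a) = 0 from K.bd_bd a, smul_zero, LinearMap.zero_apply]
  simpa only [bdc_eq_linearCombination, LinearMap.comp_apply, LinearMap.zero_apply] using
    LinearMap.congr_fun hcomp c

theorem bdp_apply (c : K.B →₀ ℤ) (x : K.B) : K.bdp c x = max (K.bdc c x) 0 :=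
  mapRange_apply ..

theorem bdm_apply (c : K.B →₀ ℤ) (x : K.B) : K.bdm c x = max (-K.bdc c x) 0 :=
  mapRange_apply ..

theorem bdp_nonneg (c : K.B →₀ ℤ) (x : K.B) : 0 ≤ K.bdp c x := by
  rw [bdp_apply]; omega

theorem bdm_nonneg (c : K.B →₀ ℤ) (x : K.B) : 0 ≤ K.bdm c x := by
  rw [bdm_apply]; omega

theorem bdp_sub_bdm (c : K.B →₀ ℤ) : K.bdp c - K.bdm c = K.bdc c := by
  ext x
  rw [Finsupp.sub_apply, bdp_apply, bdm_apply]; omega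

theorem mem_support_bdp {c : K.B →₀ ℤ} {x : K.B} : x ∈ (K.bdp c).support ↔ 0 < K.bdc c x := by
  rw [mem_support_iff, bdp_apply]; omega

theorem mem_support_bdm {c : K.B →₀ ℤ} {x : K.B} : x ∈ (K.bdm c).support ↔ K.bdc c x < 0 := by
  rw [mem_support_iff, bdm_apply]; omega

theorem bdc_bdp_eq_bdc_bdm (c : K.B →₀ ℤ) : K.bdc (K.bdp c) = K.bdc (K.bdm c) := by
  rw [← sub_add_cancel (K.bdp c) (K.bdm c), bdc_add, bdp_sub_bdm, bdc_bdc, zero_add]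

theorem bdp_bdp (c : K.B →₀ ℤ) : K.bdp (K.bdp c) = K.bdp (K.bdm c) := by
  ext x; rw [bdp_apply, bdp_apply, bdc_bdp_eq_bdc_bdm]

theorem bdm_bdp (c : K.B →₀ ℤ) : K.bdm (K.bdp c) = K.bdm (K.bdm c) := by
  ext x; rw [bdm_apply, bdm_apply, bdc_bdp_eq_bdc_bdm]

theorem bd_eq_bdc_bdm {w b : K.B} (h : K.bdp (single w 1) = single b 1) :
    K.bd b = K.bdc (K.bdm (single w 1)) := by
  rw [← bdc_single, ← h, bdc_bdp_eq_bdc_bdm]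

theorem bd_eq_zero_of_dim_eq_zero {b : K.B} (h : K.dim b = 0) : K.bd b = 0 := by
  ext x
  by_contra hx
  have := K.bd_dim b x (mem_support_iff.2 hx)
  omega

theorem dim_of_mem_support_bdp {a x : K.B} (h : x ∈ (K.bdp (single a 1)).support) :
    K.dim x + 1 = K.dim a := by
  rw [mem_support_bdp, bdc_single] at h
  exact K.bd_dim a x (mem_support_iff.2 h.ne')

theorem dim_of_mem_support_bdm {a x : K.B} (h : x ∈ (K.bdm (single a 1)).support) :
    K.dim x + 1 = K.dim a := by
  rw [mem_support_bdm, bdc_single] at h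
  exact K.bd_dim a x (mem_support_iff.2 h.ne)

theorem exists_mem_support_of_mem_support_bdp {c : K.B →₀ ℤ} (hc : ∀ b, 0 ≤ c b) {x : K.B}
    (hx : x ∈ (K.bdp c).support) : ∃ b ∈ c.support, x ∈ (K.bdp (single b 1)).support := by
  rw [mem_support_bdp, bdc_apply, ← Finset.sum_const_zero] at hx
  obtain ⟨b, hb, hpos⟩ := Finset.exists_lt_of_sum_lt hx
  exact ⟨b, hb, (K.mem_support_bdp).2 (by rw [bdc_single]; exact pos_of_mul_pos_right hpos (hc b))⟩

theorem exists_mem_support_of_mem_support_bdm {c : K.B →₀ ℤ} (hc : ∀ b, 0 ≤ c b) {x : K.B}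
    (hx : x ∈ (K.bdm c).support) : ∃ b ∈ c.support, x ∈ (K.bdm (single b 1)).support := by
  rw [mem_support_bdm, bdc_apply, ← Finset.sum_const_zero] at hx
  obtain ⟨b, hb, hneg⟩ := Finset.exists_lt_of_sum_lt hx
  exact ⟨b, hb, (K.mem_support_bdm).2 (by rw [bdc_single]; exact neg_of_mul_neg_right hneg (hc b))⟩

end Chains

theorem bdc_equivMapDomain {K K' : FADC} (φ : K.B ≃ K'.B) (c : K.B →₀ ℤ)
    (h : ∀ b ∈ c.support, K'.bd (φ b) = equivMapDomain φ (K.bd b)) :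
    K'.bdc (equivMapDomain φ c) = equivMapDomain φ (K.bdc c) := by
  rw [bdc_eq_linearCombination, bdc_eq_linearCombination, equivMapDomain_eq_mapDomain,
    linearCombination_mapDomain, equivMapDomain_eq_mapDomain, linearCombination_apply,
    linearCombination_apply, mapDomain_sum]
  refine Finsupp.sum_congr fun b hb => ?_
  rw [Function.comp_apply, h b hb, equivMapDomain_eq_mapDomain, mapDomain_smul]

end FADC

namespace FADC

variable {K : FADC}

section Unital

theorem eps_eq_one_of_dim_eq_zero (hU : K.Unital) {b : K.B} (h : K.dim b = 0) : K.eps b = 1 := by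
  simpa [h, epsc] using (hU b).1

theorem eps_eq_of_dim_eq {K' : FADC} (hU : K.Unital) (hU' : K'.Unital) {b : K.B} {b' : K'.B}
    (h : K'.dim b' = K.dim b) : K'.eps b' = K.eps b := by
  rcases Nat.eq_zero_or_pos (K.dim b) with hb | hb
  · rw [eps_eq_one_of_dim_eq_zero hU hb, eps_eq_one_of_dim_eq_zero hU' (h.trans hb)]
  · rw [K.eps_dim b hb, K'.eps_dim b' (h ▸ hb)]

theorem bdm_single_ne_zero (hU : K.Unital) {b : K.B} (h : 0 < K.dim b) :
    K.bdm (single b 1) ≠ 0 := by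
  intro hz
  have hb := (hU b).1
  obtain ⟨q, hq⟩ := Nat.exists_eq_add_one_of_ne_zero h.ne'
  have hzero : ∀ k, K.bdm^[k] 0 = 0 := fun k =>
    Function.iterate_fixed (by ext x; simp [bdm_apply, bdc]) k
  rw [hq, Function.iterate_succ_apply, hz, hzero] at hb
  simp [epsc] at hb

theorem eq_single_of_epsc_eq_one (hU : K.Unital) {c : K.B →₀ ℤ} (hc : ∀ b, 0 ≤ c b)
    (hdim : ∀ b ∈ c.support, K.dim b = 0) (h : K.epsc c = 1) : ∃ b, c = single b 1 := by
  classical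
  have hsum : ∑ b ∈ c.support, c b = 1 := by
    rw [← h, epsc, Finsupp.sum]
    exact Finset.sum_congr rfl fun b hb => by rw [eps_eq_one_of_dim_eq_zero hU (hdim b hb), mul_one]
  obtain ⟨b, hb⟩ : c.support.Nonempty := by
    by_contra hne
    rw [Finset.not_nonempty_iff_eq_empty.1 hne, Finset.sum_empty] at hsum
    omega
  have hrest : ∑ x ∈ c.support.erase b, c x = 0 := by
    have := Finset.add_sum_erase _ c hb
    have := Finset.sum_nonneg fun x (_ : x ∈ c.support.erase b) => hc x
    have := mem_support_iff.1 hb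
    have := hc b
    omega
  rw [Finset.sum_eq_zero_iff_of_nonneg fun x _ => hc x] at hrest
  refine ⟨b, ?_⟩
  ext x
  rcases eq_or_ne x b with rfl | hxb
  · rw [single_eq_same, ← hsum, ← Finset.add_sum_erase _ c hb, Finset.sum_eq_zero hrest, add_zero]
  · rw [single_eq_of_ne hxb]
    by_contra hx
    exact hx (hrest x (Finset.mem_erase.2 ⟨hxb, mem_support_iff.2 hx⟩))

end Unital

section Atom

variable {g : K.B} {n q : ℕ}

theorem atomNeg_self : K.atomNeg g n n = single g 1 := by
  simp [atomNeg]

theorem atomNeg_of_lt (h : n < q) : K.atomNeg g n q = 0 := by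
  simp [atomNeg, Nat.not_le.2 h]

theorem atomNeg_eq_bdm (h : q < n) : K.atomNeg g n q = K.bdm (K.atomNeg g n (q + 1)) := by
  rw [atomNeg, atomNeg, if_pos h.le, if_pos (Nat.succ_le_of_lt h), show n - q = n - (q + 1) + 1 by omega,
    Function.iterate_succ_apply']

theorem atomNeg_nonneg (x : K.B) : 0 ≤ K.atomNeg g n q x := by
  rcases lt_trichotomy q n with h | rfl | h
  · rw [atomNeg_eq_bdm h]; exact K.bdm_nonneg _ _
  · classical
    rw [atomNeg_self, single_apply]; split_ifs <;> omega
  · rw [atomNeg_of_lt h]; rfl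

theorem le_of_mem_support_atomNeg {x : K.B} (h : x ∈ (K.atomNeg g n q).support) : q ≤ n := by
  by_contra hq
  simp [atomNeg_of_lt (Nat.lt_of_not_le hq)] at h

theorem dim_of_mem_support_atomNeg (hg : K.dim g = n) {x : K.B}
    (h : x ∈ (K.atomNeg g n q).support) : K.dim x = q := by
  obtain ⟨d, hd⟩ := Nat.exists_eq_add_of_le (le_of_mem_support_atomNeg h)
  induction d generalizing q x with
  | zero =>
    rw [add_zero] at hd
    subst hd
    rw [atomNeg_self] at h
    rw [Finset.mem_singleton.1 (support_single_subset h), hg]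
  | succ d ih =>
    rw [atomNeg_eq_bdm (by omega)] at h
    obtain ⟨b, hb, hxb⟩ := K.exists_mem_support_of_mem_support_bdm atomNeg_nonneg h
    have := K.dim_of_mem_support_bdm hxb
    have := ih hb (by omega)
    omega

theorem atomNeg_zero_eq_single (hU : K.Unital) (hg : K.dim g = n) :
    ∃ b, K.atomNeg g n 0 = single b 1 := by
  refine eq_single_of_epsc_eq_one hU (fun _ => atomNeg_nonneg _)
    (fun _ => dim_of_mem_support_atomNeg hg) ?_
  simpa [atomNeg, hg] using (hU g).1

end Atom

section EdgeChain

variable (K) in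
/-- `g_q^-(⟨K⟩)`: its terms are the edges of the network `G_q^-(⟨K⟩)`. -/
noncomputable def edgeChain (g : K.B) (n q : ℕ) : K.B →₀ ℤ :=
  K.gch (K.atomNeg g n q) (K.atomNeg g n (q + 1))

variable {g : K.B} {n q : ℕ}

theorem gch_apply (xq c : K.B →₀ ℤ) (x : K.B) :
    K.gch xq c x = xq x + ∑ b ∈ c.support, c b * K.bdp (single b 1) x := by
  simp [gch, Finsupp.sum]

theorem mem_support_gch {xq c : K.B →₀ ℤ} (hxq : ∀ b, 0 ≤ xq b) (hc : ∀ b, 0 ≤ c b) {x : K.B} :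
    x ∈ (K.gch xq c).support ↔
      x ∈ xq.support ∨ ∃ w ∈ c.support, x ∈ (K.bdp (single w 1)).support := by
  have hterm : ∀ w ∈ c.support, 0 ≤ c w * K.bdp (single w 1) x :=
    fun w _ => mul_nonneg (hc w) (K.bdp_nonneg _ x)
  simp only [mem_support_iff, ne_eq, gch_apply,
    add_eq_zero_iff_of_nonneg (hxq x) (Finset.sum_nonneg hterm),
    Finset.sum_eq_zero_iff_of_nonneg hterm, mul_eq_zero, not_and_or, not_forall]
  aesop

theorem gch_bdm_eq (c : K.B →₀ ℤ) :
    K.gch (K.bdm c) c = K.bdp c + c.sum fun w k => k • K.bdm (single w 1) := by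
  have hsplit : (c.sum fun w k => k • K.bdp (single w 1)) =
      K.bdc c + c.sum fun w k => k • K.bdm (single w 1) := by
    rw [bdc, ← Finsupp.sum_add]
    refine Finsupp.sum_congr fun w _ => ?_
    rw [← smul_add, ← bdc_single, ← bdp_sub_bdm, sub_add_cancel]
  rw [gch, hsplit, ← add_assoc, ← bdp_sub_bdm, add_sub_cancel]

theorem mem_support_edgeChain_iff {x : K.B} :
    x ∈ (K.edgeChain g n q).support ↔ x ∈ (K.atomNeg g n q).support ∨
      ∃ w ∈ (K.atomNeg g n (q + 1)).support, x ∈ (K.bdp (single w 1)).support :=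
  mem_support_gch (fun _ => atomNeg_nonneg _) (fun _ => atomNeg_nonneg _)

theorem dim_of_mem_support_edgeChain (hg : K.dim g = n) {x : K.B}
    (h : x ∈ (K.edgeChain g n q).support) : K.dim x = q := by
  rcases mem_support_edgeChain_iff.1 h with h | ⟨w, hw, hxw⟩
  · exact dim_of_mem_support_atomNeg hg h
  · have := K.dim_of_mem_support_bdp hxw
    have := dim_of_mem_support_atomNeg hg hw
    omega

theorem mul_bdm_le_edgeChain (hq : q < n) {w : K.B} (hw : w ∈ (K.atomNeg g n (q + 1)).support)
    (y : K.B) : K.atomNeg g n (q + 1) w * K.bdm (single w 1) y ≤ K.edgeChain g n q y := by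
  rw [edgeChain, atomNeg_eq_bdm hq, gch_bdm_eq, Finsupp.add_apply, Finsupp.sum_apply]
  have := K.bdp_nonneg (K.atomNeg g n (q + 1)) y
  have := Finset.single_le_sum (f := fun w => K.atomNeg g n (q + 1) w * K.bdm (single w 1) y)
    (fun w _ => mul_nonneg (atomNeg_nonneg w) (K.bdm_nonneg _ y)) hw
  simp only [Finsupp.smul_apply, smul_eq_mul] at this ⊢
  exact le_add_of_nonneg_of_le (by assumption) this

theorem mem_support_edgeChain_of_bdm (hq : q < n) {w y : K.B}
    (hw : w ∈ (K.atomNeg g n (q + 1)).support) (hy : y ∈ (K.bdm (single w 1)).support) :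
    y ∈ (K.edgeChain g n q).support := by
  have h1 := mem_support_iff.1 hw
  have h2 := mem_support_iff.1 hy
  have := mul_bdm_le_edgeChain hq hw y
  have := mul_pos ((atomNeg_nonneg w).lt_of_ne' h1) ((K.bdm_nonneg _ y).lt_of_ne' h2)
  exact mem_support_iff.2 (by omega)

end EdgeChain

end FADC

theorem FADC.Atomic.finite {K : FADC} {n : ℕ} (h : K.Atomic n) : Finite K.B := by
  suffices hfin : ∀ d, {b | n - d ≤ K.dim b}.Finite by
    exact Set.finite_univ_iff.1 (by simpa using hfin n)
  intro d
  induction d with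
  | zero =>
    obtain ⟨g, -, hg⟩ := h.2.1
    exact (Set.finite_singleton g).subset fun b hb => hg b (le_antisymm (h.1 b) (by simpa using hb))
  | succ d ih =>
    classical
    refine (ih.union (ih.biUnion fun a _ =>
      ((K.bdm (single a 1)).support ∪ (K.bdp (single a 1)).support).finite_toSet)).subset
      fun b hb => ?_
    by_cases hbd : n - d ≤ K.dim b
    · exact Or.inl hbd
    obtain ⟨a, -, hba⟩ := h.2.2 b (by omega)
    have hda : K.dim b + 1 = K.dim a := by
      rcases hba with hba | hba
      exacts [K.dim_of_mem_support_bdm hba, K.dim_of_mem_support_bdp hba]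
    refine Or.inr (Set.mem_biUnion (x := a) (show n - d ≤ K.dim a by simp at hb; omega) ?_)
    simpa using hba

theorem FADC.LoopFree.exists_wellFounded {K : FADC} [Finite K.B] (h : K.LoopFree) :
    ∃ r : K.B → K.B → Prop, WellFounded r ∧ ∀ a, ∀ b ∈ (K.bdm (single a 1)).support,
      ∀ b' ∈ (K.bdp (single a 1)).support, r b b' := by
  obtain ⟨r, hr, hloop⟩ := h
  exact ⟨r, Finite.wellFounded_of_trans_of_irrefl r, fun a b hb b' hb' => hloop a 1 one_pos b hb b' hb'⟩

namespace IsODC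

open FADC

variable {K : FADC} {thin : K.B → Prop} {n : ℕ} {g : K.B}

theorem bdp_eq_single_of_mem (hK : IsODC K thin n) {w b : K.B} (hw : 0 < K.dim w)
    (hb : b ∈ (K.bdp (single w 1)).support) : K.bdp (single w 1) = single b 1 := by
  obtain ⟨a, -, ha⟩ := hK.bdp_basis w hw
  rw [ha] at hb ⊢
  rw [Finset.mem_singleton.1 (support_single_subset hb)]

theorem bdp_single_le_one (hK : IsODC K thin n) {w : K.B} (hw : 0 < K.dim w) (x : K.B) :
    K.bdp (single w 1) x ≤ 1 := by
  classical
  obtain ⟨a, -, ha⟩ := hK.bdp_basis w hw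
  rw [ha, single_apply]
  split_ifs <;> omega

theorem mem_support_edgeChain_of_mem_bd (hK : IsODC K thin n) (hg : K.dim g = n) {q : ℕ}
    (hq : q < n) {a x : K.B} (ha : a ∈ (K.edgeChain g n (q + 1)).support)
    (hx : x ∈ (K.bdm (single a 1)).support ∨ x ∈ (K.bdp (single a 1)).support) :
    x ∈ (K.edgeChain g n q).support := by
  have := hK.atomic.finite
  obtain ⟨r, hwf, hr⟩ := hK.loopFree.exists_wellFounded
  induction a using hwf.induction generalizing x with
  | _ a ih =>
  rcases mem_support_edgeChain_iff.1 ha with ha | ⟨w, hw, haw⟩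
  · rcases hx with hx | hx
    · exact mem_support_edgeChain_of_bdm hq ha hx
    · exact mem_support_edgeChain_iff.2 (Or.inr ⟨a, ha, hx⟩)
  -- `a = ∂⁺w`, so `∂a = ∂∂⁻w` and `x` lies in the boundary of a term `c` of `∂⁻w`, with `c < a`.
  have hw2 : q + 2 ≤ n := le_of_mem_support_atomNeg hw
  have hwa := hK.bdp_eq_single_of_mem (by rw [dim_of_mem_support_atomNeg hg hw]; omega) haw
  obtain ⟨c, hc, hxc⟩ : ∃ c ∈ (K.bdm (single w 1)).support,
      x ∈ (K.bdm (single c 1)).support ∨ x ∈ (K.bdp (single c 1)).support := by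
    rw [← hwa, K.bdm_bdp, K.bdp_bdp] at hx
    rcases hx with hx | hx
    · obtain ⟨c, hc, h⟩ := K.exists_mem_support_of_mem_support_bdm (K.bdm_nonneg _) hx
      exact ⟨c, hc, Or.inl h⟩
    · obtain ⟨c, hc, h⟩ := K.exists_mem_support_of_mem_support_bdp (K.bdm_nonneg _) hx
      exact ⟨c, hc, Or.inr h⟩
  exact ih c (hr w c hc a (by simp [hwa])) (mem_support_edgeChain_of_bdm (by omega) hw hc) hxc

theorem mem_support_edgeChain (hK : IsODC K thin n) (hg : K.dim g = n) (b : K.B) :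
    b ∈ (K.edgeChain g n (K.dim b)).support := by
  obtain ⟨d, hd⟩ := Nat.exists_eq_add_of_le (hK.atomic.1 b)
  induction d generalizing b with
  | zero =>
    obtain rfl : b = g := hK.atomic.2.1.unique (by omega) hg
    rw [hg]
    exact mem_support_edgeChain_iff.2 (Or.inl (by simp [atomNeg_self]))
  | succ d ih =>
    obtain ⟨a, -, hba⟩ := hK.atomic.2.2 b (by omega)
    have hda : K.dim b + 1 = K.dim a := by
      rcases hba with hba | hba
      exacts [K.dim_of_mem_support_bdm hba, K.dim_of_mem_support_bdp hba]
    exact hK.mem_support_edgeChain_of_mem_bd hg (by omega) (hda ▸ ih a (by omega)) hba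

theorem bd_map {K' : FADC} (hK : IsODC K thin n) (hg : K.dim g = n) (φ : K.B ≃ K'.B)
    (hdim : ∀ b, K'.dim (φ b) = K.dim b)
    (hvert : ∀ q, ∀ w ∈ (K.atomNeg g n (q + 1)).support,
      K'.bdp (single (φ w) 1) = equivMapDomain φ (K.bdp (single w 1)) ∧
      K'.bdm (single (φ w) 1) = equivMapDomain φ (K.bdm (single w 1)))
    (b : K.B) : K'.bd (φ b) = equivMapDomain φ (K.bd b) := by
  have := hK.atomic.finite
  obtain ⟨r, hwf, hr⟩ := hK.loopFree.exists_wellFounded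
  induction b using hwf.induction with
  | _ b ih =>
  obtain hb | ⟨q, hq⟩ : K.dim b = 0 ∨ ∃ q, K.dim b = q + 1 :=
    (K.dim b).eq_zero_or_eq_succ_pred.imp_right fun h => ⟨_, h⟩
  · rw [K.bd_eq_zero_of_dim_eq_zero hb, K'.bd_eq_zero_of_dim_eq_zero ((hdim b).trans hb),
      equivMapDomain_zero]
  have hmem := hK.mem_support_edgeChain hg b
  rw [hq, mem_support_edgeChain_iff] at hmem
  rcases hmem with hb | ⟨w, hw, hbw⟩
  · obtain ⟨hp, hm⟩ := hvert _ b hb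
    rw [← K.bdc_single, ← K.bdp_sub_bdm, ← K'.bdc_single, ← K'.bdp_sub_bdm, hp, hm,
      equivMapDomain_eq_mapDomain, equivMapDomain_eq_mapDomain, equivMapDomain_eq_mapDomain,
      mapDomain_sub]
  · obtain ⟨hp, hm⟩ := hvert _ w hw
    have hwb := hK.bdp_eq_single_of_mem (by rw [dim_of_mem_support_atomNeg hg hw]; omega) hbw
    have hwb' : K'.bdp (single (φ w) 1) = single (φ b) 1 := by
      rw [hp, hwb, equivMapDomain_single]
    rw [K.bd_eq_bdc_bdm hwb, K'.bd_eq_bdc_bdm hwb', hm]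
    exact bdc_equivMapDomain φ _ fun c hc => ih c (hr w c hc b (by simp [hwb]))

end IsODC

/-- The data witnessing `RealizedBy K thin n g S`, together with the hypotheses on `K` and `g`. -/
structure Realization (K : FADC) (thin : K.B → Prop) (n : ℕ) (g : K.B)
    (S : OpetopicSequence n) where
  isODC : IsODC K thin n
  dim_g : K.dim g = n
  eE : ∀ q : Fin (n + 1), (S.N q).E → K.B
  eV : ∀ q : Fin (n + 1), (S.N q).V → K.B
  eE_injective : ∀ q, Function.Injective (eE q)
  eE_mem_support : ∀ (q : Fin (n + 1)) e, eE q e ∈ (K.edgeChain g n q).support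
  exists_eE : ∀ q : Fin (n + 1), ∀ b ∈ (K.edgeChain g n q).support, ∃ e, eE q e = b
  eV_mem_support : ∀ (q : Fin (n + 1)) v, eV q v ∈ (K.atomNeg g n (q + 1)).support
  exists_eV : ∀ q : Fin (n + 1), ∀ b ∈ (K.atomNeg g n (q + 1)).support, ∃ v, eV q v = b
  src_eq_some_iff : ∀ (q : Fin (n + 1)) e v,
    (S.N q).src e = some v ↔ eE q e ∈ (K.bdp (single (eV q v) 1)).support
  tgt_eq_some_iff : ∀ (q : Fin (n + 1)) e v,
    (S.N q).tgt e = some v ↔ eE q e ∈ (K.bdm (single (eV q v) 1)).support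
  thinE_iff : ∀ (q : Fin (n + 1)) e, (S.N q).thinE e ↔ thin (eE q e)
  eE_c : ∀ (q : Fin n) v, eE q.succ (S.c q v) = eV q.castSucc v

theorem RealizedBy.nonempty_realization {K : FADC} {thin : K.B → Prop} {n : ℕ} {g : K.B}
    {S : OpetopicSequence n} (hK : IsODC K thin n) (hg : K.dim g = n)
    (h : RealizedBy K thin n g S) : Nonempty (Realization K thin n g S) := by
  obtain ⟨eE, eV, h, hc⟩ := h
  choose hinj hmem hsurj _ hmemV hsurjV hsrc htgt hthin _ using h
  exact ⟨⟨hK, hg, eE, eV, hinj, hmem, hsurj, hmemV, hsurjV, hsrc, htgt, hthin, hc⟩⟩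

namespace Realization

open FADC

variable {K : FADC} {thin : K.B → Prop} {n : ℕ} {g : K.B} {S : OpetopicSequence n}
  (R : Realization K thin n g S)

theorem dim_eE (q : Fin (n + 1)) (e : (S.N q).E) : K.dim (R.eE q e) = q :=
  dim_of_mem_support_edgeChain R.dim_g (R.eE_mem_support q e)

theorem dim_eV (q : Fin (n + 1)) (v : (S.N q).V) : K.dim (R.eV q v) = q + 1 :=
  dim_of_mem_support_atomNeg R.dim_g (R.eV_mem_support q v)

theorem lt_of_eV (R : Realization K thin n g S) (q : Fin (n + 1)) (v : (S.N q).V) : (q : ℕ) < n :=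
  le_of_mem_support_atomNeg (R.eV_mem_support q v)

theorem mem_support_bdp_eV_iff {q : Fin (n + 1)} (v : (S.N q).V) (x : K.B) :
    x ∈ (K.bdp (single (R.eV q v) 1)).support ↔ ∃ e, (S.N q).src e = some v ∧ R.eE q e = x := by
  refine ⟨fun hx => ?_, fun ⟨e, he, hex⟩ => hex ▸ (R.src_eq_some_iff q e v).1 he⟩
  obtain ⟨e, rfl⟩ := R.exists_eE q x
    (mem_support_edgeChain_iff.2 (Or.inr ⟨_, R.eV_mem_support q v, hx⟩))
  exact ⟨e, (R.src_eq_some_iff q e v).2 hx, rfl⟩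

theorem mem_support_bdm_eV_iff {q : Fin (n + 1)} (v : (S.N q).V) (x : K.B) :
    x ∈ (K.bdm (single (R.eV q v) 1)).support ↔ ∃ e, (S.N q).tgt e = some v ∧ R.eE q e = x := by
  refine ⟨fun hx => ?_, fun ⟨e, he, hex⟩ => hex ▸ (R.tgt_eq_some_iff q e v).1 he⟩
  obtain ⟨e, rfl⟩ := R.exists_eE q x
    (mem_support_edgeChain_of_bdm (R.lt_of_eV q v) (R.eV_mem_support q v) hx)
  exact ⟨e, (R.tgt_eq_some_iff q e v).2 hx, rfl⟩

theorem edgeChain_eE_of_src_eq_none {q : Fin (n + 1)} {e : (S.N q).E}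
    (h : (S.N q).src e = none) : K.edgeChain g n q (R.eE q e) = K.atomNeg g n q (R.eE q e) := by
  rw [edgeChain, gch_apply, add_eq_left]
  refine Finset.sum_eq_zero fun w hw => ?_
  obtain ⟨v, rfl⟩ := R.exists_eV q w hw
  by_contra hne
  have := (R.src_eq_some_iff q e v).2 (mem_support_iff.2 (right_ne_zero_of_mul hne))
  simp [h] at this

theorem src_eq_none_of_mem_atomNeg {q : Fin (n + 1)} {e : (S.N q).E}
    (h : R.eE q e ∈ (K.atomNeg g n q).support) : (S.N q).src e = none := by
  rcases Fin.eq_zero_or_eq_succ q with rfl | ⟨p, rfl⟩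
  · -- `⟨K⟩⁻₀` is a single element, which must be the first edge `ι 0` of the linear network
    obtain ⟨-, k, ι, -, hι, -, -⟩ := S.linear0
    obtain ⟨b, hb⟩ := atomNeg_zero_eq_single R.isODC.unital R.dim_g
    have hι0 : R.eE 0 (ι 0) ∈ (K.atomNeg g n (0 : Fin (n + 1))).support := by
      rw [mem_support_iff, ← R.edgeChain_eE_of_src_eq_none hι, ← mem_support_iff]
      exact R.eE_mem_support 0 (ι 0)
    rw [Fin.val_zero, hb] at h hι0
    rwa [R.eE_injective 0 ((Finset.mem_singleton.1 (support_single_subset h)).trans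
      (Finset.mem_singleton.1 (support_single_subset hι0)).symm)]
  · obtain ⟨v, hv⟩ := R.exists_eV p.castSucc _ (by simpa using h)
    obtain rfl : S.c p v = e := R.eE_injective _ ((R.eE_c p v).trans hv)
    exact (S.constell p).1 v

theorem edgeChain_eE_of_src_eq_some {q : Fin (n + 1)} {e : (S.N q).E} {v : (S.N q).V}
    (h : (S.N q).src e = some v) :
    K.edgeChain g n q (R.eE q e) = K.atomNeg g n (q + 1) (R.eV q v) := by
  have hxq : K.atomNeg g n q (R.eE q e) = 0 := by
    by_contra hne
    simp [R.src_eq_none_of_mem_atomNeg (mem_support_iff.2 hne)] at h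
  have hev := (R.src_eq_some_iff q e v).1 h
  have hone : K.bdp (single (R.eV q v) 1) (R.eE q e) = 1 := by
    have := mem_support_iff.1 hev
    have := R.isODC.bdp_single_le_one (by rw [R.dim_eV q v]; omega) (R.eE q e)
    have := K.bdp_nonneg (single (R.eV q v) 1) (R.eE q e)
    omega
  rw [edgeChain, gch_apply, hxq, zero_add,
    Finset.sum_eq_single_of_mem _ (R.eV_mem_support q v) fun w hw hwv => ?_, hone, mul_one]
  obtain ⟨v', rfl⟩ := R.exists_eV q w hw
  by_contra hne
  have := (R.src_eq_some_iff q e v').2 (mem_support_iff.2 (right_ne_zero_of_mul hne))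
  rw [h, Option.some_inj] at this
  exact hwv (congrArg _ this.symm)

theorem atomNeg_eV_le_edgeChain {q : Fin (n + 1)} {e : (S.N q).E} {v : (S.N q).V}
    (h : (S.N q).tgt e = some v) :
    K.atomNeg g n (q + 1) (R.eV q v) ≤ K.edgeChain g n q (R.eE q e) := by
  have := mem_support_iff.1 ((R.tgt_eq_some_iff q e v).1 h)
  have := K.bdm_nonneg (single (R.eV q v) 1) (R.eE q e)
  exact (le_mul_of_one_le_right (atomNeg_nonneg _)
    (by omega : 1 ≤ K.bdm (single (R.eV q v) 1) (R.eE q e))).trans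
    (mul_bdm_le_edgeChain (R.lt_of_eV q v) (R.eV_mem_support q v) _)

theorem exists_tgt_eq_some (R : Realization K thin n g S) (q : Fin (n + 1)) (v : (S.N q).V) : ∃ e, (S.N q).tgt e = some v := by
  obtain ⟨y, hy⟩ := support_nonempty_iff.2
    (bdm_single_ne_zero R.isODC.unital (by rw [R.dim_eV]; omega : 0 < K.dim (R.eV q v)))
  obtain ⟨e, he, -⟩ := (R.mem_support_bdm_eV_iff v y).1 hy
  exact ⟨e, he⟩

/-- Walking back along the acyclic network `G_q`: an edge with a source `v` has the coefficient of
`v` in `⟨K⟩⁻_{q+1}`, which is bounded by the coefficient of an edge with target `v`. -/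
theorem edgeChain_eE_le_one {q : Fin (n + 1)} (hq : ∀ x, K.atomNeg g n q x ≤ 1)
    (e : (S.N q).E) : K.edgeChain g n q (R.eE q e) ≤ 1 := by
  induction e using (S.N q).acyclic.wellFounded.induction with
  | _ e ih =>
  cases hsrc : (S.N q).src e with
  | none => rw [R.edgeChain_eE_of_src_eq_none hsrc]; exact hq _
  | some v =>
    obtain ⟨e', he'⟩ := R.exists_tgt_eq_some q v
    rw [R.edgeChain_eE_of_src_eq_some hsrc]
    exact (R.atomNeg_eV_le_edgeChain he').trans (ih e' ⟨v, he', hsrc⟩)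

theorem atomNeg_le_one (R : Realization K thin n g S) (q : ℕ) (x : K.B) : K.atomNeg g n q x ≤ 1 := by
  induction q generalizing x with
  | zero =>
    classical
    obtain ⟨b, hb⟩ := atomNeg_zero_eq_single R.isODC.unital R.dim_g
    rw [hb, single_apply]
    split_ifs <;> omega
  | succ q ih =>
    by_cases hx : x ∈ (K.atomNeg g n (q + 1)).support
    · have hqn := le_of_mem_support_atomNeg hx
      obtain ⟨v, rfl⟩ := R.exists_eV ⟨q, by omega⟩ x hx
      obtain ⟨e, he⟩ := R.exists_tgt_eq_some _ v
      exact (R.atomNeg_eV_le_edgeChain he).trans (R.edgeChain_eE_le_one ih e)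
    · rw [notMem_support_iff.1 hx]
      omega

theorem bdm_eV_le_one {q : Fin (n + 1)} (v : (S.N q).V) (x : K.B) :
    K.bdm (single (R.eV q v) 1) x ≤ 1 := by
  by_cases hx : x ∈ (K.bdm (single (R.eV q v) 1)).support
  · obtain ⟨e, he, rfl⟩ := (R.mem_support_bdm_eV_iff v x).1 hx
    have := mem_support_iff.1 (R.eV_mem_support q v)
    have := atomNeg_nonneg (g := g) (n := n) (q := q + 1) (R.eV q v)
    exact (le_mul_of_one_le_left (K.bdm_nonneg _ _)
      (by omega : 1 ≤ K.atomNeg g n (q + 1) (R.eV q v))).trans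
      ((mul_bdm_le_edgeChain (R.lt_of_eV q v) (R.eV_mem_support q v) _).trans
        (R.edgeChain_eE_le_one (fun y => R.atomNeg_le_one q y) e))
  · rw [notMem_support_iff.1 hx]
    omega

theorem exists_eE_eq (x : K.B) : ∃ q e, R.eE q e = x := by
  have hx := R.isODC.atomic.1 x
  exact ⟨⟨K.dim x, by omega⟩, R.exists_eE _ x (R.isODC.mem_support_edgeChain R.dim_g x)⟩

noncomputable def edgeEquiv : (Σ q : Fin (n + 1), (S.N q).E) ≃ K.B :=
  Equiv.ofBijective (fun p => R.eE p.1 p.2)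
    ⟨fun ⟨q₁, e₁⟩ ⟨q₂, e₂⟩ h => by
      have h : R.eE q₁ e₁ = R.eE q₂ e₂ := h
      obtain rfl : q₁ = q₂ := Fin.ext (by rw [← R.dim_eE q₁ e₁, ← R.dim_eE q₂ e₂, h])
      rw [R.eE_injective q₁ h],
    fun x => by
      obtain ⟨q, e, he⟩ := R.exists_eE_eq x
      exact ⟨⟨q, e⟩, he⟩⟩

end Realization

namespace Realization

open FADC

variable {K K' : FADC} {thin : K.B → Prop} {thin' : K'.B → Prop} {n : ℕ} {g : K.B} {g' : K'.B}
  {S S' : OpetopicSequence n} (R : Realization K thin n g S) (R' : Realization K' thin' n g' S')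
  (fE : ∀ q : Fin (n + 1), (S.N q).E ≃ (S'.N q).E) (fV : ∀ q : Fin (n + 1), (S.N q).V ≃ (S'.N q).V)

noncomputable def transport : K.B ≃ K'.B :=
  R.edgeEquiv.symm.trans ((Equiv.sigmaCongrRight fE).trans R'.edgeEquiv)

theorem transport_eE (q : Fin (n + 1)) (e : (S.N q).E) :
    R.transport R' fE (R.eE q e) = R'.eE q (fE q e) := by
  have : R.edgeEquiv.symm (R.eE q e) = ⟨q, e⟩ := R.edgeEquiv.symm_apply_eq.2 rfl
  simp only [transport, Equiv.trans_apply, this, Equiv.sigmaCongrRight_apply]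
  rfl

theorem transport_eV (hc : ∀ (q : Fin n) v, fE q.succ (S.c q v) = S'.c q (fV q.castSucc v))
    (q : Fin (n + 1)) (v : (S.N q).V) : R.transport R' fE (R.eV q v) = R'.eV q (fV q v) := by
  obtain ⟨p, rfl⟩ : ∃ p : Fin n, p.castSucc = q := ⟨⟨q, R.lt_of_eV q v⟩, rfl⟩
  rw [← R.eE_c, transport_eE, hc, R'.eE_c]

theorem dim_transport (b : K.B) : K'.dim (R.transport R' fE b) = K.dim b := by
  obtain ⟨q, e, rfl⟩ := R.exists_eE_eq b
  rw [transport_eE, dim_eE, dim_eE]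

theorem thin_transport (hthin : ∀ q e, (S.N q).thinE e ↔ (S'.N q).thinE (fE q e)) (b : K.B) :
    thin' (R.transport R' fE b) ↔ thin b := by
  obtain ⟨q, e, rfl⟩ := R.exists_eE_eq b
  rw [transport_eE, ← R.thinE_iff, ← R'.thinE_iff, hthin]

theorem bdp_transport_eV (hc : ∀ (q : Fin n) v, fE q.succ (S.c q v) = S'.c q (fV q.castSucc v))
    (hsrc : ∀ q e v, (S.N q).src e = some v ↔ (S'.N q).src (fE q e) = some (fV q v))
    (q : Fin (n + 1)) (v : (S.N q).V) :
    K'.bdp (single (R.transport R' fE (R.eV q v)) 1) =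
      equivMapDomain (R.transport R' fE) (K.bdp (single (R.eV q v) 1)) := by
  rw [R.transport_eV R' fE fV hc]
  refine (equivMapDomain_eq_of_mem_support_iff _ (K.bdp_nonneg _)
    (R.isODC.bdp_single_le_one (by rw [R.dim_eV]; omega)) (K'.bdp_nonneg _)
    (R'.isODC.bdp_single_le_one (by rw [R'.dim_eV]; omega)) fun x => ?_).symm
  simp only [mem_support_bdp_eV_iff, (fE q).surjective.exists, ← hsrc, ← R.transport_eE R' fE,
    (R.transport R' fE).injective.eq_iff]

theorem bdm_transport_eV (hc : ∀ (q : Fin n) v, fE q.succ (S.c q v) = S'.c q (fV q.castSucc v))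
    (htgt : ∀ q e v, (S.N q).tgt e = some v ↔ (S'.N q).tgt (fE q e) = some (fV q v))
    (q : Fin (n + 1)) (v : (S.N q).V) :
    K'.bdm (single (R.transport R' fE (R.eV q v)) 1) =
      equivMapDomain (R.transport R' fE) (K.bdm (single (R.eV q v) 1)) := by
  rw [R.transport_eV R' fE fV hc]
  refine (equivMapDomain_eq_of_mem_support_iff _ (K.bdm_nonneg _) (R.bdm_eV_le_one v)
    (K'.bdm_nonneg _) (R'.bdm_eV_le_one _) fun x => ?_).symm
  simp only [mem_support_bdm_eV_iff, (fE q).surjective.exists, ← htgt, ← R.transport_eE R' fE,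
    (R.transport R' fE).injective.eq_iff]

theorem bd_transport (hc : ∀ (q : Fin n) v, fE q.succ (S.c q v) = S'.c q (fV q.castSucc v))
    (hsrc : ∀ q e v, (S.N q).src e = some v ↔ (S'.N q).src (fE q e) = some (fV q v))
    (htgt : ∀ q e v, (S.N q).tgt e = some v ↔ (S'.N q).tgt (fE q e) = some (fV q v))
    (b : K.B) : K'.bd (R.transport R' fE b) = equivMapDomain (R.transport R' fE) (K.bd b) := by
  refine R.isODC.bd_map R.dim_g _ (R.dim_transport R' fE) (fun q w hw => ?_) b
  have hq : q < n := le_of_mem_support_atomNeg hw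
  obtain ⟨v, rfl⟩ := R.exists_eV ⟨q, by omega⟩ w hw
  exact ⟨R.bdp_transport_eV R' fE fV hc hsrc _ v, R.bdm_transport_eV R' fE fV hc htgt _ v⟩

end Realization

/-- Theorem 5.3 (uniqueness part): if the opetopic sequences associated to two
`n`-dimensional opetopic directed complexes `K` and `K'` are isomorphic, then `K`
and `K'` are isomorphic as opetopic directed complexes. -/
theorem stmt16 (n : ℕ) (K K' : FADC) (thin : K.B → Prop) (thin' : K'.B → Prop)
    (hK : IsODC K thin n) (hK' : IsODC K' thin' n)
    (g : K.B) (hg : K.dim g = n) (g' : K'.B) (hg' : K'.dim g' = n)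
    (S S' : OpetopicSequence n)
    (hS : RealizedBy K thin n g S) (hS' : RealizedBy K' thin' n g' S')
    (hiso : SeqIso n S S') :
    ∃ φ : K.B ≃ K'.B,
      (∀ b, K'.dim (φ b) = K.dim b) ∧
      (∀ b, thin' (φ b) ↔ thin b) ∧
      (∀ b, K'.bd (φ b) = Finsupp.equivMapDomain φ (K.bd b)) ∧
      (∀ b, K'.eps (φ b) = K.eps b) := by
  obtain ⟨R⟩ := hS.nonempty_realization hK hg
  obtain ⟨R'⟩ := hS'.nonempty_realization hK' hg'
  obtain ⟨fE, fV, hN, hc⟩ := hiso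
  refine ⟨R.transport R' fE, R.dim_transport R' fE,
    R.thin_transport R' fE fun q => (hN q).2.2.1,
    R.bd_transport R' fE fV hc (fun q => (hN q).1) (fun q => (hN q).2.1), fun b => ?_⟩
  exact FADC.eps_eq_of_dim_eq hK.unital hK'.unital (R.dim_transport R' fE b)
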